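/- (Bound (3.25) of Remark 3.8) Fix n ≥ 2. Let K₀ > 0, ω_i > 0 (i = 0,…,n−1), let P_i ∈ ℝ^{i×i} be symmetric positive definite, p_i ∈ ℝⁱ, c_i ∈ ℝⁱ arbitrary vectors, and let K_i, R_i > 0 satisfy K_i ≤ R_i for i = 1,…,n−1. Let a_i > 0 satisfy x'Q_i'P_iQ_ix ≥ a_i²|Q_ix|² for all x ∈ ℝⁿ. Define k : ℝⁿ → ℝ by: k(x) = −K₀·sat(ω₀x₁) if x'Q_l'P_lQ_lx ≥ R_l² for all l = 1,…,n−1, and otherwise k(x) = p_i'Q_ix − K_i c_i'b_i·sat(ω_i(x_{i+1} + c_i'Q_ix)) where i ∈ {1,…,n−1} is the largest integer with x'Q_i'P_iQ_ix < R_i². Then |k(x)| ≤ max{K₀, max_{i=1,…,n−1} R_i(|p_i|·a_i^{−1} + |c_i'b_i|)} for all x ∈ ℝⁿ. -/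

import Mathlib

open Matrix MeasureTheory Set Filter

noncomputable section

/-- The `m × m` matrix with ones on the subdiagonal and zeros elsewhere. -/
def matA (m : ℕ) : Matrix (Fin m) (Fin m) ℝ :=
  Matrix.of fun i j => if (i : ℕ) = (j : ℕ) + 1 then 1 else 0

/-- The vector `b = (1,0,…,0)'` as a plain function. -/
def vecbf (m : ℕ) : Fin m → ℝ := fun i => if (i : ℕ) = 0 then 1 else 0

/-- The vector `b = (1,0,…,0)'` in Euclidean space. -/
def vecb (m : ℕ) : EuclideanSpace ℝ (Fin m) := (WithLp.equiv 2 (Fin m → ℝ)).symm (vecbf m)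

/-- View a Euclidean vector as a plain function. -/
def ef {m : ℕ} (x : EuclideanSpace ℝ (Fin m)) : Fin m → ℝ := x

/-- Matrix-vector multiplication on Euclidean space. -/
def mulVecE {m : ℕ} (M : Matrix (Fin m) (Fin m) ℝ) (x : EuclideanSpace ℝ (Fin m)) :
    EuclideanSpace ℝ (Fin m) :=
  (WithLp.equiv 2 (Fin m → ℝ)).symm (M.mulVec (ef x))

/-- Euclidean inner product `x'y`. -/
def ip {m : ℕ} (x y : EuclideanSpace ℝ (Fin m)) : ℝ := ∑ i, x i * y i

/-- Quadratic form `x'Px`. -/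
def qf {m : ℕ} (P : Matrix (Fin m) (Fin m) ℝ) (x : EuclideanSpace ℝ (Fin m)) : ℝ :=
  ip x (mulVecE P x)

/-- The saturation function `sat(s) = s / max(1,|s|)`. -/
def sat (s : ℝ) : ℝ := s / max 1 |s|

/-- A sampling schedule with maximum allowable sampling period `r`. -/
def Sched (r : ℝ) (τ : ℕ → ℝ) : Prop :=
  τ 0 = 0 ∧ (∀ i, 0 < τ (i+1) - τ i) ∧ (∀ i, τ (i+1) - τ i ≤ r) ∧
    Tendsto τ atTop atTop

/-- Truncation keeping the first `m` coordinates (and padding by zeros):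
this represents `x̄_m = (x₁,…,x_m)'`. -/
def truncV {n : ℕ} (m : ℕ) (x : EuclideanSpace ℝ (Fin (n+1))) : EuclideanSpace ℝ (Fin (n+1)) :=
  (WithLp.equiv 2 (Fin (n+1) → ℝ)).symm (fun i => if (i : ℕ) < m then x i else 0)

/-- A (locally absolutely continuous) solution of the closed-loop sampled-data feedforward
system (1.1) with feedback `k`, sampling times `τ` and disturbance `d`:
`ẋ₁ = u`, `ẋᵢ = x_{i-1} + gᵢ(d, x₁,…,x_{i-1}, u)` for `i = 2,…,n`, with
`u = k(x(τ_i))` held constant on each sampling interval. -/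
def FFSol {l n : ℕ}
    (g : Fin (n+1) → EuclideanSpace ℝ (Fin l) → EuclideanSpace ℝ (Fin (n+1)) → ℝ → ℝ)
    (k : EuclideanSpace ℝ (Fin (n+1)) → ℝ) (τ : ℕ → ℝ)
    (d : ℝ → EuclideanSpace ℝ (Fin l))
    (x : ℝ → EuclideanSpace ℝ (Fin (n+1))) : Prop :=
  ∃ x' : ℝ → EuclideanSpace ℝ (Fin (n+1)),
    (∀ T : ℝ, IntervalIntegrable x' volume 0 T) ∧
    (∀ t : ℝ, 0 ≤ t → x t = x 0 + ∫ s in (0:ℝ)..t, x' s) ∧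
    ∀ i : ℕ, ∀ᵐ t ∂(volume.restrict (Ico (τ i) (τ (i+1)))),
      x' t 0 = k (x (τ i)) ∧
      ∀ j : Fin (n+1), (j : ℕ) ≠ 0 →
        x' t j = x t ⟨(j : ℕ) - 1, by have := j.isLt; omega⟩
            + g j (d t) (x t) (k (x (τ i)))

/-- For `j : Fin (n+1)` one has `j + 1 ≤ n + 2`. -/
theorem jle {n : ℕ} (j : Fin (n+1)) : (j : ℕ) + 1 ≤ n + 2 := by have := j.isLt; omega

/-- The projection `Q_m x = (x₁,…,x_m)'` keeping the first `m` coordinates. -/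
def Qtr {N : ℕ} (m : ℕ) (hm : m ≤ N) (x : EuclideanSpace ℝ (Fin N)) :
    EuclideanSpace ℝ (Fin m) :=
  (WithLp.equiv 2 (Fin m → ℝ)).symm (fun j => x (Fin.castLE hm j))

open Classical in
/-- The feedback law (3.19)–(3.21): if `x'Q_l'P_lQ_lx ≥ R_l²` for all `l` then
`k(x) = -K₀ sat(ω₀ x₁)`; otherwise `k(x) = p_i'Q_ix - K_i c_i'b_i sat(ω_i(x_{i+1} + c_i'Q_ix))`
with `i` the largest index such that `x'Q_i'P_iQ_ix < R_i²`.  Here the index `j : Fin (n+1)`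
encodes the paper's index `i = j + 1 ∈ {1,…,n+1}` for the state dimension `n+2`. -/
def kfb (n : ℕ) (K0 : ℝ) (ω : Fin (n+2) → ℝ)
    (P : (j : Fin (n+1)) → Matrix (Fin ((j : ℕ)+1)) (Fin ((j : ℕ)+1)) ℝ)
    (p c : (j : Fin (n+1)) → EuclideanSpace ℝ (Fin ((j : ℕ)+1)))
    (K R : Fin (n+1) → ℝ) (x : EuclideanSpace ℝ (Fin (n+2))) : ℝ :=
  if h : (Finset.univ.filter fun j : Fin (n+1) =>
      qf (P j) (Qtr ((j : ℕ)+1) (jle j) x) < (R j) ^ 2).Nonempty then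
    let j := (Finset.univ.filter fun j : Fin (n+1) =>
      qf (P j) (Qtr ((j : ℕ)+1) (jle j) x) < (R j) ^ 2).max' h
    ip (p j) (Qtr ((j : ℕ)+1) (jle j) x)
      - K j * ip (c j) (vecb ((j : ℕ)+1))
        * sat (ω ⟨(j : ℕ)+1, by have := j.isLt; omega⟩
            * (x ⟨(j : ℕ)+1, by have := j.isLt; omega⟩ + ip (c j) (Qtr ((j : ℕ)+1) (jle j) x)))
  else -K0 * sat (ω 0 * x 0)

/-! Since `|sat| ≤ 1`, the saturated law is bounded by `K₀`. In the local regime `i`, the point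
`Q_ix` lies in the sublevel set `{y | y'P_iy < R_i²}`, where `a_i²|y|² ≤ y'P_iy` forces
`|y| < R_i/a_i`; Cauchy–Schwarz then bounds `p_i'Q_ix`, and `K_i ≤ R_i` together with
`|sat| ≤ 1` bounds the remaining term by `R_i|c_i'b_i|`. -/

theorem abs_sat_le_one (s : ℝ) : |sat s| ≤ 1 := by
  have hpos : (0 : ℝ) < max 1 |s| := lt_max_of_lt_left one_pos
  rw [sat, abs_div, abs_of_pos hpos, div_le_one hpos]
  exact le_max_right 1 |s|

theorem abs_mul_sat_le {K : ℝ} (hK : 0 ≤ K) (s : ℝ) : |K * sat s| ≤ K := by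
  rw [abs_mul, abs_of_nonneg hK]
  exact mul_le_of_le_one_right hK (abs_sat_le_one s)

theorem ip_eq_inner {m : ℕ} (x y : EuclideanSpace ℝ (Fin m)) : ip x y = inner ℝ x y := by
  simp [ip, PiLp.inner_apply, mul_comm]

theorem abs_ip_le {m : ℕ} (x y : EuclideanSpace ℝ (Fin m)) : |ip x y| ≤ ‖x‖ * ‖y‖ :=
  ip_eq_inner x y ▸ abs_real_inner_le_norm x y

theorem lt_mul_inv_of_sq_mul_sq_lt_sq {a t R : ℝ} (ha : 0 < a) (hR : 0 ≤ R)
    (h : a ^ 2 * t ^ 2 < R ^ 2) : t < R * a⁻¹ := by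
  have hat : |a * t| < R := by
    rw [← abs_of_nonneg hR]
    exact sq_lt_sq.mp (by rwa [mul_pow])
  rw [← div_eq_mul_inv, lt_div_iff₀ ha, mul_comm]
  exact (le_abs_self _).trans_lt hat

theorem abs_ip_sub_mul_sat_le {m : ℕ} {P : Matrix (Fin m) (Fin m) ℝ}
    {p y : EuclideanSpace ℝ (Fin m)} {a K R : ℝ} (ha : 0 < a) (hK : 0 ≤ K) (hKR : K ≤ R)
    (hquad : a ^ 2 * ‖y‖ ^ 2 ≤ qf P y) (hlt : qf P y < R ^ 2) (β s : ℝ) :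
    |ip p y - K * β * sat s| ≤ R * (‖p‖ * a⁻¹ + |β|) := by
  have hy : ‖y‖ ≤ R * a⁻¹ :=
    (lt_mul_inv_of_sq_mul_sq_lt_sq ha (hK.trans hKR) (hquad.trans_lt hlt)).le
  have hp : |ip p y| ≤ ‖p‖ * (R * a⁻¹) :=
    (abs_ip_le p y).trans (mul_le_mul_of_nonneg_left hy (norm_nonneg p))
  have hsat : |K * β * sat s| ≤ R * |β| := by
    rw [mul_right_comm, abs_mul]
    exact mul_le_mul_of_nonneg_right ((abs_mul_sat_le hK s).trans hKR) (abs_nonneg β)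
  calc |ip p y - K * β * sat s| ≤ |ip p y| + |K * β * sat s| := abs_sub _ _
    _ ≤ ‖p‖ * (R * a⁻¹) + R * |β| := add_le_add hp hsat
    _ = R * (‖p‖ * a⁻¹ + |β|) := by ring

theorem remark_3_8_bound_general (n : ℕ) (K0 : ℝ) (hK0 : 0 < K0)
    (ω : Fin (n+2) → ℝ)
    (P : (j : Fin (n+1)) → Matrix (Fin ((j : ℕ)+1)) (Fin ((j : ℕ)+1)) ℝ)
    (p c : (j : Fin (n+1)) → EuclideanSpace ℝ (Fin ((j : ℕ)+1)))
    (K R : Fin (n+1) → ℝ) (hKpos : ∀ j, 0 < K j)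
    (hKR : ∀ j, K j ≤ R j)
    (a : Fin (n+1) → ℝ) (ha : ∀ j, 0 < a j)
    (hquad : ∀ j : Fin (n+1), ∀ x : EuclideanSpace ℝ (Fin (n+2)),
      (a j) ^ 2 * ‖Qtr ((j : ℕ)+1) (jle j) x‖ ^ 2 ≤ qf (P j) (Qtr ((j : ℕ)+1) (jle j) x)) :
    ∀ x : EuclideanSpace ℝ (Fin (n+2)),
      |kfb n K0 ω P p c K R x| ≤
        max K0 (Finset.univ.sup' Finset.univ_nonempty fun j : Fin (n+1) =>
          R j * (‖p j‖ * (a j)⁻¹ + |ip (c j) (vecb ((j : ℕ)+1))|)) := by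
  intro x
  unfold kfb
  split_ifs with h
  · obtain ⟨-, hlt⟩ := Finset.mem_filter.mp (Finset.max'_mem _ h)
    exact le_max_of_le_right <|
      (abs_ip_sub_mul_sat_le (ha _) (hKpos _).le (hKR _) (hquad _ x) hlt _ _).trans
        (Finset.le_sup' (fun j => R j * (‖p j‖ * (a j)⁻¹ + |ip (c j) (vecb ((j : ℕ)+1))|))
          (Finset.mem_univ _))
  · rw [neg_mul, abs_neg]
    exact le_max_of_le_left (abs_mul_sat_le hK0.le _)

/-- **Bound (3.25) of Remark 3.8.** If `Kᵢ ≤ Rᵢ` and `x'Qᵢ'PᵢQᵢx ≥ aᵢ²|Qᵢx|²` with `aᵢ > 0`,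
then the feedback (3.19)–(3.21) satisfies
`|k(x)| ≤ max{K₀, maxᵢ Rᵢ(|pᵢ| aᵢ⁻¹ + |cᵢ'bᵢ|)}` for all `x`.  Here the index
`j : Fin (n+1)` encodes the paper's index `i = j + 1 ∈ {1,…,n+1}` for state dimension
`n+2 ≥ 2`. -/
theorem remark_3_8_bound (n : ℕ) (K0 : ℝ) (hK0 : 0 < K0)
    (ω : Fin (n+2) → ℝ) (hω : ∀ i, 0 < ω i)
    (P : (j : Fin (n+1)) → Matrix (Fin ((j : ℕ)+1)) (Fin ((j : ℕ)+1)) ℝ)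
    (hPsymm : ∀ j, (P j).IsSymm) (hP : ∀ j, (P j).PosDef)
    (p c : (j : Fin (n+1)) → EuclideanSpace ℝ (Fin ((j : ℕ)+1)))
    (K R : Fin (n+1) → ℝ) (hKpos : ∀ j, 0 < K j) (hRpos : ∀ j, 0 < R j)
    (hKR : ∀ j, K j ≤ R j)
    (a : Fin (n+1) → ℝ) (ha : ∀ j, 0 < a j)
    (hquad : ∀ j : Fin (n+1), ∀ x : EuclideanSpace ℝ (Fin (n+2)),
      (a j) ^ 2 * ‖Qtr ((j : ℕ)+1) (jle j) x‖ ^ 2 ≤ qf (P j) (Qtr ((j : ℕ)+1) (jle j) x)) :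
    ∀ x : EuclideanSpace ℝ (Fin (n+2)),
      |kfb n K0 ω P p c K R x| ≤
        max K0 (Finset.univ.sup' Finset.univ_nonempty fun j : Fin (n+1) =>
          R j * (‖p j‖ * (a j)⁻¹ + |ip (c j) (vecb ((j : ℕ)+1))|)) :=
  remark_3_8_bound_general n K0 hK0 ω P p c K R hKpos hKR a ha hquad
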